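/- arXiv:2404.01200 — 4 statements merged into one kernel-verified Lean document; each statement's English description precedes it below -/
import Mathlib

section
/- The convex conjugate of the Cressie-Read function φ_k is φ_k*(t) = (1/k)·[((k-1)t + 1)_+^{k*} − 1], where k* = k/(k-1), i.e., sup_{s ≥ 0} (t·s − φ_k(s)) = (1/k)·[((k-1)t + 1)_+^{k*} − 1] for all t ∈ ℝ. -/
/-!
With `c = (k - 1) t + 1` one has `t s - φ_k(s) = (s c - s^k / k) / (k - 1) - 1 / k`, so everything
reduces to the conjugate of `s ↦ s^p / p` on `[0, ∞)`. By Young's inequality for the conjugate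
exponents `p = k`, `q = k*`, that conjugate is `(c)_+^q / q`, attained at `s = (c)_+^{q/p}`, the
equality case of Young's inequality.
-/

open Set

namespace Real

variable {p q : ℝ}

theorem mul_sub_rpow_div_le_max_rpow_div (hpq : p.HolderConjugate q) (c : ℝ) {s : ℝ}
    (hs : 0 ≤ s) :
    s * c - s ^ p / p ≤ max c 0 ^ q / q := by
  have hsc : s * c ≤ s * max c 0 := mul_le_mul_of_nonneg_left (le_max_left c 0) hs
  linarith [young_inequality_of_nonneg hs (le_max_right c 0) hpq]

theorem mul_sub_rpow_div_eq_max_rpow_div (hpq : p.HolderConjugate q) (c : ℝ) :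
    max c 0 ^ (q / p) * c - (max c 0 ^ (q / p)) ^ p / p = max c 0 ^ q / q := by
  set m := max c 0
  set s := m ^ (q / p)
  have hm : 0 ≤ m := le_max_right c 0
  have hsp : s ^ p = m ^ q := by
    rw [← rpow_mul hm, div_mul_cancel₀ q hpq.ne_zero]
  -- for `c < 0` the maximiser `s` is `0`, so `c` may be replaced by `m` in every case
  have hsc : s * c = s * m := by
    rcases le_or_gt 0 c with hc | hc
    · rw [show m = c from max_eq_left hc]
    · have hm0 : m = 0 := max_eq_right hc.le
      have hs0 : s = 0 := by
        simp only [s, hm0]; exact zero_rpow (div_ne_zero hpq.symm.ne_zero hpq.ne_zero)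
      rw [hs0, zero_mul, zero_mul]
  have hyoung := (young_inequality_eq_iff_of_nonneg (rpow_nonneg hm _) hm hpq).2 hsp
  linarith

theorem isGreatest_image_mul_sub_rpow_div (hpq : p.HolderConjugate q) (c : ℝ) :
    IsGreatest ((fun s ↦ s * c - s ^ p / p) '' Ici 0) (max c 0 ^ q / q) :=
  ⟨⟨_, rpow_nonneg (le_max_right c 0) _, mul_sub_rpow_div_eq_max_rpow_div hpq c⟩,
    by rintro _ ⟨s, hs, rfl⟩; exact mul_sub_rpow_div_le_max_rpow_div hpq c hs⟩

end Real

theorem cressie_read_conjugate_general (k : ℝ) (hk1 : 1 < k) (t : ℝ) :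
    IsLUB {y : ℝ | ∃ s : ℝ, 0 ≤ s ∧ y = t * s - (s ^ k - k * s + k - 1) / (k * (k - 1))}
      ((1 / k) * ((max ((k - 1) * t + 1) 0) ^ (k / (k - 1)) - 1)) := by
  have hk : k ≠ 0 := by positivity
  have hk' : k - 1 ≠ 0 := sub_ne_zero.2 hk1.ne'
  set c := (k - 1) * t + 1
  set g : ℝ → ℝ := fun y ↦ (k - 1)⁻¹ * y - k⁻¹
  have hg : Monotone g := fun a b hab ↦
    sub_le_sub_right (mul_le_mul_of_nonneg_left hab (inv_nonneg.2 (sub_nonneg.2 hk1.le))) _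
  have hφ : ∀ s, t * s - (s ^ k - k * s + k - 1) / (k * (k - 1)) = g (s * c - s ^ k / k) := by
    intro s; simp only [g, c]; field_simp; ring
  have hval :
      1 / k * (max c 0 ^ (k / (k - 1)) - 1) = g (max c 0 ^ (k / (k - 1)) / (k / (k - 1))) := by
    simp only [g]; field_simp
  obtain ⟨⟨s₀, hs₀, hy₀⟩, hub⟩ :=
    Real.isGreatest_image_mul_sub_rpow_div (q := k / (k - 1)) (.conjExponent hk1) c
  refine IsGreatest.isLUB ⟨⟨s₀, hs₀, by rw [hval, ← hy₀, hφ]⟩, ?_⟩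
  rintro _ ⟨s, hs, rfl⟩
  rw [hφ, hval]
  exact hg (hub ⟨s, hs, rfl⟩)

/-- The convex conjugate of the Cressie-Read function φ_k is
φ_k*(t) = (1/k)·[((k-1)t + 1)_+^{k*} − 1], with k* = k/(k-1):
sup_{s ≥ 0} (t·s − φ_k(s)) equals this value for all t ∈ ℝ. -/
theorem cressie_read_conjugate (k : ℝ) (hk1 : 1 < k) (hk2 : k ≤ 2) (t : ℝ) :
    IsLUB {y : ℝ | ∃ s : ℝ, 0 ≤ s ∧ y = t * s - (s ^ k - k * s + k - 1) / (k * (k - 1))}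
      ((1 / k) * ((max ((k - 1) * t + 1) 0) ^ (k / (k - 1)) - 1)) :=
  cressie_read_conjugate_general k hk1 t
end

section
/- The convex conjugate of the smoothed-CVaR divergence φ_s equals φ_s*(t) = (1/μ)·log(1 − μ + μ·e^t), i.e., sup_{0 ≤ s < 1/μ} (t·s − φ_s(s)) = (1/μ)·log(1 − μ + μ·e^t) for every t ∈ ℝ. -/
/-!
With `A = 1 - μ + μ eᵗ`, the point `s⋆ = eᵗ / A` lies in `[0, 1/μ)` and `1 - μ s⋆ = (1 - μ) / A`.
Bounding both entropy terms of `φ_s` from below by the tangent lines of `x ↦ x log x` at `s⋆` and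
at `1 - μ s⋆` gives the Fenchel–Young inequality `t s - φ_s(s) ≤ (1/μ) log A`; the two linear
remainders cancel because `s ↦ 1 - μ s` is affine. Equality holds at `s = s⋆`, so the supremum is
attained there.
-/

open Real

namespace Real

theorem mul_log_add_sub_le_mul_log {s r : ℝ} (hs : 0 ≤ s) (hr : 0 < r) :
    s * log r + s - r ≤ s * log s := by
  rcases hs.eq_or_lt with rfl | hs
  · simpa using hr.le
  · have hlog : log r - log s ≤ r / s - 1 := by
      rw [← log_div hr.ne' hs.ne']
      exact log_le_sub_one_of_pos (div_pos hr hs)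
    have := mul_le_mul_of_nonneg_left hlog hs.le
    rw [mul_sub s (r / s), mul_div_cancel₀ r hs.ne'] at this
    linarith

end Real

namespace SmoothedCVaR

noncomputable def divergence (μ s : ℝ) : ℝ :=
  s * log s + ((1 - μ * s) / μ) * log ((1 - μ * s) / (1 - μ))

noncomputable def conjugate (μ t : ℝ) : ℝ :=
  (1 / μ) * log (1 - μ + μ * exp t)

noncomputable def maximizer (μ t : ℝ) : ℝ :=
  exp t / (1 - μ + μ * exp t)

variable {μ : ℝ} (hμ0 : 0 < μ) (hμ1 : μ < 1) (t : ℝ)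
include hμ0 hμ1

theorem normalizer_pos : 0 < 1 - μ + μ * exp t := by
  have := exp_pos t
  nlinarith

theorem one_sub_mul_maximizer :
    1 - μ * maximizer μ t = (1 - μ) / (1 - μ + μ * exp t) := by
  have := (normalizer_pos hμ0 hμ1 t).ne'
  rw [maximizer]
  field_simp
  ring

theorem maximizer_pos : 0 < maximizer μ t :=
  div_pos (exp_pos t) (normalizer_pos hμ0 hμ1 t)

theorem one_sub_mul_maximizer_pos : 0 < 1 - μ * maximizer μ t := by
  rw [one_sub_mul_maximizer hμ0 hμ1]
  exact div_pos (sub_pos.2 hμ1) (normalizer_pos hμ0 hμ1 t)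

theorem maximizer_lt_inv : maximizer μ t < 1 / μ := by
  have := one_sub_mul_maximizer_pos hμ0 hμ1 t
  rw [lt_div_iff₀ hμ0]
  linarith

theorem log_maximizer : log (maximizer μ t) = t - log (1 - μ + μ * exp t) := by
  rw [maximizer, log_div (exp_pos t).ne' (normalizer_pos hμ0 hμ1 t).ne', log_exp]

theorem log_one_sub_mul_maximizer :
    log (1 - μ * maximizer μ t) = log (1 - μ) - log (1 - μ + μ * exp t) := by
  rw [one_sub_mul_maximizer hμ0 hμ1, log_div (sub_pos.2 hμ1).ne' (normalizer_pos hμ0 hμ1 t).ne']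

theorem sub_divergence_le {s : ℝ} (hs0 : 0 ≤ s) (hs1 : s < 1 / μ) :
    t * s - divergence μ s ≤ conjugate μ t := by
  have hu : 0 < 1 - μ * s := by
    rw [lt_div_iff₀ hμ0] at hs1
    linarith
  have h_s := mul_log_add_sub_le_mul_log hs0 (maximizer_pos hμ0 hμ1 t)
  have h_u := mul_log_add_sub_le_mul_log hu.le (one_sub_mul_maximizer_pos hμ0 hμ1 t)
  rw [log_maximizer hμ0 hμ1] at h_s
  rw [log_one_sub_mul_maximizer hμ0 hμ1] at h_u
  have h_div : μ * divergence μ s =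
      μ * (s * log s) + (1 - μ * s) * (log (1 - μ * s) - log (1 - μ)) := by
    rw [divergence, log_div hu.ne' (sub_pos.2 hμ1).ne']
    field_simp
  have key : μ * (t * s - divergence μ s) ≤ log (1 - μ + μ * exp t) := by
    rw [mul_sub, h_div]
    linear_combination μ * h_s + h_u
  rw [conjugate, one_div_mul_eq_div, le_div_iff₀ hμ0, mul_comm]
  exact key

theorem sub_divergence_maximizer :
    t * maximizer μ t - divergence μ (maximizer μ t) = conjugate μ t := by
  rw [divergence, conjugate, log_div (one_sub_mul_maximizer_pos hμ0 hμ1 t).ne' (sub_pos.2 hμ1).ne',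
    log_maximizer hμ0 hμ1, log_one_sub_mul_maximizer hμ0 hμ1]
  field_simp
  ring

end SmoothedCVaR

/-- The convex conjugate of the smoothed-CVaR divergence φ_s is
φ_s*(t) = (1/μ)log(1−μ+μe^t): sup over 0 ≤ s < 1/μ of (t·s − φ_s(s)) equals this. -/
theorem smoothed_cvar_conjugate (μ : ℝ) (hμ0 : 0 < μ) (hμ1 : μ < 1) (t : ℝ) :
    IsLUB {y : ℝ | ∃ s : ℝ, 0 ≤ s ∧ s < 1 / μ ∧
        y = t * s - (s * Real.log s + ((1 - μ * s) / μ) * Real.log ((1 - μ * s) / (1 - μ)))}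
      ((1 / μ) * Real.log (1 - μ + μ * Real.exp t)) := by
  open SmoothedCVaR in
  refine IsGreatest.isLUB ⟨⟨maximizer μ t, (maximizer_pos hμ0 hμ1 t).le,
    maximizer_lt_inv hμ0 hμ1 t, (sub_divergence_maximizer hμ0 hμ1 t).symm⟩,
    fun _ ⟨_, hs0, hs1, hy⟩ => hy ▸ sub_divergence_le hμ0 hμ1 t hs0 hs1⟩
end

section
/- Plugging the optimal λ*(η) into the dual objective yields inf_{λ>0} F(λ, η) = ω·(E[(L−η)_+^{k*}])^{1/k*} + η, where ω = (k(k−1)ρ + 1)^{1/k}. -/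
/-!
With `q = k / (k - 1)` the Hölder conjugate of `k`, the dual objective is
`A λ^(1-q) + B λ + η`. Writing `B = c^k / k` and `A = d^q / q`, Young's inequality for
`c λ^(1/k)` and `d λ^(-1/k)` bounds `A λ^(1-q) + B λ` below by `c d`, with equality at
`λ = d c^(1-k)`. For the coefficients of the dual objective, `c d = ω S^(1/q)` with
`S = E[(L-η)₊^q]`.
-/

open Real

namespace Real.HolderConjugate

variable {p q c d t : ℝ} (hpq : p.HolderConjugate q)
include hpq

/-- Young's inequality applied to `c t^(1/p)` and `d t^(-1/p)`. -/
theorem mul_le_young_family (hc : 0 ≤ c) (hd : 0 ≤ d) (ht : 0 < t) :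
    c * d ≤ c ^ p / p * t + d ^ q / q * t ^ (1 - q) := by
  have young := young_inequality_of_nonneg (mul_nonneg hc (rpow_nonneg ht.le (1 / p)))
    (mul_nonneg hd (rpow_nonneg ht.le (-(1 / p)))) hpq
  have hexp : -(1 / p) * q = 1 - q := by
    have := hpq.symm.div_conj_eq_sub_one
    field_simp at this ⊢; linarith
  rwa [mul_mul_mul_comm, ← rpow_add ht, add_neg_cancel, rpow_zero, mul_one,
    mul_rpow hc (rpow_nonneg ht.le _), mul_rpow hd (rpow_nonneg ht.le _), ← rpow_mul ht.le,
    ← rpow_mul ht.le, one_div_mul_cancel hpq.ne_zero, rpow_one, hexp, mul_div_right_comm,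
    mul_div_right_comm (d ^ q)] at young

/-- Equality case: at `t = d c^(1-p)` one has `(c t^(1/p))^p = (d t^(-1/p))^q`. -/
theorem young_family_eq_mul (hc : 0 < c) (hd : 0 ≤ d) :
    c ^ p / p * (d * c ^ (1 - p)) + d ^ q / q * (d * c ^ (1 - p)) ^ (1 - q) = c * d := by
  have hexp : (1 - p) * (1 - q) = 1 := by linear_combination hpq.mul_eq_add
  have hc_pow : c ^ p * c ^ (1 - p) = c := by rw [← rpow_add hc, add_sub_cancel, rpow_one]
  have hd_pow : d ^ q * d ^ (1 - q) = d := by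
    rw [← rpow_add' hd (by norm_num), add_sub_cancel, rpow_one]
  rw [mul_rpow hd (rpow_nonneg hc.le _), ← rpow_mul hc.le, hexp, rpow_one]
  calc c ^ p / p * (d * c ^ (1 - p)) + d ^ q / q * (d ^ (1 - q) * c)
      = (c ^ p * c ^ (1 - p)) * d / p + (d ^ q * d ^ (1 - q)) * c / q := by ring
    _ = c * d * (p⁻¹ + q⁻¹) := by rw [hc_pow, hd_pow]; ring
    _ = c * d := by rw [hpq.inv_add_inv_eq_one, mul_one]

theorem isLeast_young_family {A B : ℝ} (hA : 0 < A) (hB : 0 < B) :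
    IsLeast {y | ∃ t, 0 < t ∧ y = A * t ^ (1 - q) + t * B}
      ((p * B) ^ (1 / p) * (q * A) ^ (1 / q)) := by
  set c := (p * B) ^ (1 / p)
  set d := (q * A) ^ (1 / q)
  have hc : 0 < c := rpow_pos_of_pos (mul_pos hpq.pos hB) _
  have hd : 0 < d := rpow_pos_of_pos (mul_pos hpq.symm.pos hA) _
  have hcB : c ^ p / p = B := by
    rw [← rpow_mul (mul_pos hpq.pos hB).le, one_div_mul_cancel hpq.ne_zero, rpow_one,
      mul_div_cancel_left₀ _ hpq.ne_zero]
  have hdA : d ^ q / q = A := by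
    rw [← rpow_mul (mul_pos hpq.symm.pos hA).le, one_div_mul_cancel hpq.symm.ne_zero, rpow_one,
      mul_div_cancel_left₀ _ hpq.symm.ne_zero]
  have hfamily : ∀ t, A * t ^ (1 - q) + t * B = c ^ p / p * t + d ^ q / q * t ^ (1 - q) := by
    intro t; rw [hcB, hdA]; ring
  refine ⟨⟨d * c ^ (1 - p), by positivity, ?_⟩, ?_⟩
  · rw [hfamily, hpq.young_family_eq_mul hc hd.le]
  · rintro _ ⟨t, ht, rfl⟩
    rw [hfamily]
    exact hpq.mul_le_young_family hc.le hd.le ht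

theorem dual_coeffs_rpow_eq {ρ S : ℝ} (hρ : 0 ≤ p * (p - 1) * ρ + 1) (hS : 0 ≤ S) :
    (p * (ρ + 1 / (p * (p - 1)))) ^ (1 / p) * (q * ((p - 1) ^ q / p * S)) ^ (1 / q)
      = (p * (p - 1) * ρ + 1) ^ (1 / p) * S ^ (1 / q) := by
  have hp1 := hpq.sub_one_pos
  have hB : p * (ρ + 1 / (p * (p - 1))) = (p * (p - 1) * ρ + 1) / (p - 1) := by
    field_simp [hpq.ne_zero]
  have hA : q * ((p - 1) ^ q / p * S) = (p - 1) ^ (q - 1) * S := by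
    rw [rpow_sub_one hp1.ne']
    field_simp [hpq.ne_zero]
    linear_combination S * hpq.sub_one_mul_conj
  have hexp : (q - 1) * (1 / q) = 1 / p := by
    have := hpq.inv_add_inv_eq_one
    field_simp [hpq.symm.ne_zero] at this ⊢; linarith
  rw [hB, hA, div_rpow hρ hp1.le, mul_rpow (rpow_nonneg hp1.le _) hS, ← rpow_mul hp1.le, hexp]
  field_simp [(rpow_pos_of_pos hp1 (1 / p)).ne']

end Real.HolderConjugate

theorem dual_objective_infimum_general {ι : Type*} [Fintype ι] (k ρ η : ℝ) (hk1 : 1 < k)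
    (hρ : 0 < ρ) (p L : ι → ℝ)
    (hpos : 0 < ∑ i, p i * (max (L i - η) 0) ^ (k / (k - 1))) :
    IsGLB {y : ℝ | ∃ lam : ℝ, 0 < lam ∧
        y = ((k - 1) ^ (k / (k - 1)) / k) * (∑ i, p i * (max (L i - η) 0) ^ (k / (k - 1)))
              * lam ^ (1 - k / (k - 1)) + lam * (ρ + 1 / (k * (k - 1))) + η}
      ((k * (k - 1) * ρ + 1) ^ (1 / k) *
        (∑ i, p i * (max (L i - η) 0) ^ (k / (k - 1))) ^ (1 / (k / (k - 1))) + η) := by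
  have hk : k.HolderConjugate (k / (k - 1)) := .conjExponent hk1
  set S := ∑ i, p i * (max (L i - η) 0) ^ (k / (k - 1))
  have hk0 := hk.pos
  have hk_sub_one := hk.sub_one_pos
  obtain ⟨⟨t, ht, hmin⟩, hlower⟩ :=
    hk.isLeast_young_family (A := (k - 1) ^ (k / (k - 1)) / k * S) (by positivity)
      (B := ρ + 1 / (k * (k - 1))) (by positivity)
  rw [hk.dual_coeffs_rpow_eq (by positivity) hpos.le] at hmin hlower
  refine IsLeast.isGLB ⟨⟨t, ht, by rw [hmin]⟩, ?_⟩
  rintro _ ⟨lam, hlam, rfl⟩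
  linarith [hlower ⟨lam, hlam, rfl⟩]

/-- Plugging the optimal λ*(η) into the dual objective:
inf_{λ>0} F(λ,η) = ω (E[(L−η)₊^{k*}])^{1/k*} + η with ω = (k(k−1)ρ+1)^{1/k}. -/
theorem dual_objective_infimum {ι : Type*} [Fintype ι] (k ρ η : ℝ) (hk1 : 1 < k)
    (hk2 : k ≤ 2) (hρ : 0 < ρ) (p L : ι → ℝ) (hp : ∀ i, 0 ≤ p i) (hpsum : ∑ i, p i = 1)
    (hpos : 0 < ∑ i, p i * (max (L i - η) 0) ^ (k / (k - 1))) :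
    IsGLB {y : ℝ | ∃ lam : ℝ, 0 < lam ∧
        y = ((k - 1) ^ (k / (k - 1)) / k) * (∑ i, p i * (max (L i - η) 0) ^ (k / (k - 1)))
              * lam ^ (1 - k / (k - 1)) + lam * (ρ + 1 / (k * (k - 1))) + η}
      ((k * (k - 1) * ρ + 1) ^ (1 / k) *
        (∑ i, p i * (max (L i - η) 0) ^ (k / (k - 1))) ^ (1 / (k / (k - 1))) + η) :=
  dual_objective_infimum_general k ρ η hk1 hρ p L hpos
end

section
/- If η* < 0 is a critical point of η ↦ ω·(E[(L−η)_+^{k*}])^{1/k*} + η with L valued in [0, B] and ω > 1, then |η*| ≤ (1/ω)^{1/(k*−1)}·B / (1 − (1/ω)^{1/(k*−1)}). -/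
/-!
Write `M = -η* > 0` and `X = L + M`, so that `M ≤ X ≤ B + M`. Since `X ≤ B + M`,
`E[X^k] ≤ (B + M) E[X^(k-1)]`, and the first-order condition turns this into
`ω E[X^k]^(1/k) ≤ B + M`. As `X ≥ M`, also `M ≤ E[X^k]^(1/k)`, whence `ω M ≤ B + M`.
Because `k ≥ 2`, the weaker `ω^(1/(k-1)) M ≤ B + M` follows, which rearranges to the bound.
-/

open Finset Real

section WeightedSums

variable {ι : Type*} [Fintype ι] {p X : ι → ℝ}

theorem sum_mul_rpow_le_mul_sum_mul_rpow_sub_one {c : ℝ} (k : ℝ) (hp : ∀ i, 0 ≤ p i)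
    (hX : ∀ i, 0 < X i) (hXc : ∀ i, X i ≤ c) :
    ∑ i, p i * X i ^ k ≤ c * ∑ i, p i * X i ^ (k - 1) := by
  rw [mul_sum]
  refine sum_le_sum fun i _ => ?_
  have hsplit : X i ^ k = X i ^ (k - 1) * X i := by
    rw [← rpow_add_one (hX i).ne', sub_add_cancel]
  rw [hsplit, ← mul_assoc, mul_comm c]
  exact mul_le_mul_of_nonneg_left (hXc i) (mul_nonneg (hp i) (rpow_nonneg (hX i).le _))

theorem rpow_le_sum_mul_rpow {m k : ℝ} (hp : ∀ i, 0 ≤ p i) (hpsum : ∑ i, p i = 1)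
    (hm : 0 ≤ m) (hk : 0 ≤ k) (hmX : ∀ i, m ≤ X i) :
    m ^ k ≤ ∑ i, p i * X i ^ k :=
  calc m ^ k = ∑ i, p i * m ^ k := by rw [← sum_mul, hpsum, one_mul]
    _ ≤ ∑ i, p i * X i ^ k := sum_le_sum fun i _ =>
        mul_le_mul_of_nonneg_left (rpow_le_rpow hm (hmX i) hk) (hp i)

end WeightedSums

theorem mul_rpow_one_div_le_of_mul_rpow_mul_eq_one {ω k S T c : ℝ} (hω : 0 ≤ ω) (hk : k ≠ 0)
    (hS : 0 < S) (hST : S ≤ c * T) (hcrit : ω * S ^ ((1 - k) / k) * T = 1) :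
    ω * S ^ (1 / k) ≤ c := by
  have hsplit : S ^ (1 / k) = S ^ ((1 - k) / k) * S := by
    rw [← rpow_add_one hS.ne']
    congr 1
    field_simp
    ring
  calc ω * S ^ (1 / k) = ω * S ^ ((1 - k) / k) * S := by rw [hsplit, mul_assoc]
    _ ≤ ω * S ^ ((1 - k) / k) * (c * T) := by gcongr
    _ = c := by linear_combination c * hcrit

theorem le_inv_mul_div_one_sub_inv_of_mul_le_add {a M B : ℝ} (ha : 1 < a)
    (h : a * M ≤ B + M) : M ≤ a⁻¹ * B / (1 - a⁻¹) := by
  have ha0 : a ≠ 0 := by positivity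
  have hform : a⁻¹ * B / (1 - a⁻¹) = B / (a - 1) := by
    rw [← mul_div_mul_left _ _ ha0, mul_sub, mul_inv_cancel₀ ha0, ← mul_assoc,
      mul_inv_cancel₀ ha0, one_mul, mul_one]
  rw [hform, le_div_iff₀ (sub_pos.2 ha)]
  linarith

theorem eta_star_bound_general {ι : Type*} [Fintype ι] (kst B ω ηstar : ℝ) (hkst : 2 ≤ kst)
    (hω : 1 < ω) (p L : ι → ℝ) (hp : ∀ i, 0 ≤ p i) (hpsum : ∑ i, p i = 1)
    (hL : ∀ i, L i ∈ Set.Icc (0 : ℝ) B) (hηstar : ηstar < 0)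
    (hcrit : ω * (∑ i, p i * (max (L i - ηstar) 0) ^ kst) ^ ((1 - kst) / kst) *
      (∑ i, p i * (max (L i - ηstar) 0) ^ (kst - 1)) = 1) :
    |ηstar| ≤ (1 / ω) ^ (1 / (kst - 1)) * B / (1 - (1 / ω) ^ (1 / (kst - 1))) := by
  set M := -ηstar
  have hM : 0 < M := neg_pos.2 hηstar
  have hX : ∀ i, max (L i - ηstar) 0 = L i + M := fun i =>
    max_eq_left (by linarith [(hL i).1])
  simp only [hX] at hcrit
  have hmoment : M ^ kst ≤ ∑ i, p i * (L i + M) ^ kst :=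
    rpow_le_sum_mul_rpow hp hpsum hM.le (by linarith) fun i => by linarith [(hL i).1]
  have hωM : ω * M ≤ B + M := by
    have hS := (rpow_pos_of_pos hM kst).trans_le hmoment
    calc ω * M ≤ ω * (∑ i, p i * (L i + M) ^ kst) ^ (1 / kst) := by
          gcongr
          rwa [one_div, le_rpow_inv_iff_of_pos hM.le hS.le (by linarith)]
      _ ≤ B + M := mul_rpow_one_div_le_of_mul_rpow_mul_eq_one (by linarith) (by linarith) hS
          (sum_mul_rpow_le_mul_sum_mul_rpow_sub_one kst hp (fun i => by linarith [(hL i).1])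
            fun i => by linarith [(hL i).2]) hcrit
  have he : 0 < 1 / (kst - 1) := one_div_pos.2 (by linarith)
  rw [abs_of_neg hηstar, one_div ω, inv_rpow (by linarith)]
  refine le_inv_mul_div_one_sub_inv_of_mul_le_add (one_lt_rpow hω he) ?_
  calc ω ^ (1 / (kst - 1)) * M ≤ ω * M := by
        gcongr
        exact rpow_le_self_of_one_le hω.le ((div_le_one (by linarith)).2 (by linarith))
    _ ≤ B + M := hωM

/-- If η* < 0 is a critical point of η ↦ ω (E[(L−η)₊^{k*}])^{1/k*} + η with L valued in
[0,B] and ω > 1, then |η*| ≤ (1/ω)^{1/(k*−1)} B / (1 − (1/ω)^{1/(k*−1)}). -/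
theorem eta_star_bound {ι : Type*} [Fintype ι] (kst B ω ηstar : ℝ) (hkst : 2 ≤ kst)
    (hB : 0 < B) (hω : 1 < ω) (p L : ι → ℝ) (hp : ∀ i, 0 ≤ p i) (hpsum : ∑ i, p i = 1)
    (hL : ∀ i, L i ∈ Set.Icc (0 : ℝ) B) (hηstar : ηstar < 0)
    (hcrit : ω * (∑ i, p i * (max (L i - ηstar) 0) ^ kst) ^ ((1 - kst) / kst) *
      (∑ i, p i * (max (L i - ηstar) 0) ^ (kst - 1)) = 1) :
    |ηstar| ≤ (1 / ω) ^ (1 / (kst - 1)) * B / (1 - (1 / ω) ^ (1 / (kst - 1))) :=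
  eta_star_bound_general kst B ω ηstar hkst hω p L hp hpsum hL hηstar hcrit
end
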